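/- Suppose B = T(A) where T is a positive, injective linear map on Hermitian operators of a finite-dimensional Hilbert space that is orthogonal for the Hilbert–Schmidt inner product, and B is positive semidefinite. Then A is positive semidefinite. -/

import Mathlib

open Matrix
open scoped ComplexOrder

/-!
For every `P ⪰ 0` we get `Tr(A P) = Tr(T(A) T(P)) = Tr(B T(P)) ≥ 0`, because `T(P) ⪰ 0` and the
trace pairing of two positive semidefinite matrices is nonnegative. Taking `P = x xᴴ` turns
`Tr(A P)` into `xᴴ A x`, so `A ⪰ 0`.
-/

namespace Matrix

variable {n 𝕜 : Type*} [Fintype n] [RCLike 𝕜]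

theorem trace_mul_vecMulVec {R : Type*} [CommSemiring R] (A : Matrix n n R) (x y : n → R) :
    (A * vecMulVec x y).trace = y ⬝ᵥ A *ᵥ x := by
  rw [mul_vecMulVec, trace_vecMulVec, dotProduct_comm]

theorem PosSemidef.trace_mul_nonneg {A B : Matrix n n 𝕜} (hA : A.PosSemidef)
    (hB : B.PosSemidef) : 0 ≤ (A * B).trace := by
  classical
  open scoped MatrixOrder Matrix.Norms.L2Operator in
  obtain ⟨S, rfl⟩ := CStarAlgebra.nonneg_iff_eq_star_mul_self.mp hB.nonneg
  rw [star_eq_conjTranspose, ← mul_assoc, trace_mul_comm, ← mul_assoc]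
  exact (hA.mul_mul_conjTranspose_same S).trace_nonneg

theorem posSemidef_of_forall_trace_mul_nonneg {A : Matrix n n 𝕜} (hA : A.IsHermitian)
    (h : ∀ P : Matrix n n 𝕜, P.PosSemidef → 0 ≤ (A * P).trace) : A.PosSemidef :=
  .of_dotProduct_mulVec_nonneg hA fun x => by
    simpa only [trace_mul_vecMulVec] using h _ (posSemidef_vecMulVec_self_star x)

end Matrix

theorem stmt_11_general (N : ℕ)
    (T : selfAdjoint (Matrix (Fin N) (Fin N) ℂ) →ₗ[ℝ]
      selfAdjoint (Matrix (Fin N) (Fin N) ℂ))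
    (hpos : ∀ X : selfAdjoint (Matrix (Fin N) (Fin N) ℂ),
      ((X : Matrix (Fin N) (Fin N) ℂ)).PosSemidef →
      ((T X : Matrix (Fin N) (Fin N) ℂ)).PosSemidef)
    (horth : ∀ X Y : selfAdjoint (Matrix (Fin N) (Fin N) ℂ),
      ((T X : Matrix (Fin N) (Fin N) ℂ) * (T Y : Matrix (Fin N) (Fin N) ℂ)).trace =
      ((X : Matrix (Fin N) (Fin N) ℂ) * (Y : Matrix (Fin N) (Fin N) ℂ)).trace)
    (A B : selfAdjoint (Matrix (Fin N) (Fin N) ℂ))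
    (hTA : T A = B)
    (hBpsd : ((B : Matrix (Fin N) (Fin N) ℂ)).PosSemidef) :
    ((A : Matrix (Fin N) (Fin N) ℂ)).PosSemidef := by
  refine posSemidef_of_forall_trace_mul_nonneg A.2 fun P hP => ?_
  let Ps : selfAdjoint (Matrix (Fin N) (Fin N) ℂ) := ⟨P, hP.isHermitian⟩
  calc 0 ≤ ((B : Matrix (Fin N) (Fin N) ℂ) * (T Ps : Matrix (Fin N) (Fin N) ℂ)).trace :=
        hBpsd.trace_mul_nonneg (hpos Ps hP)
    _ = ((A : Matrix (Fin N) (Fin N) ℂ) * P).trace := by rw [← hTA, horth A Ps]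

/-- Suppose `B = T(A)` where `T` is a positive, injective linear map on
the Hermitian operators of a finite-dimensional Hilbert space that is orthogonal for the
Hilbert–Schmidt inner product `Tr(XY)`, and `B` is positive semidefinite. Then `A` is
positive semidefinite. -/
theorem stmt_11 (N : ℕ)
    (T : selfAdjoint (Matrix (Fin N) (Fin N) ℂ) →ₗ[ℝ]
      selfAdjoint (Matrix (Fin N) (Fin N) ℂ))
    (hpos : ∀ X : selfAdjoint (Matrix (Fin N) (Fin N) ℂ),
      ((X : Matrix (Fin N) (Fin N) ℂ)).PosSemidef →
      ((T X : Matrix (Fin N) (Fin N) ℂ)).PosSemidef)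
    (hinj : Function.Injective T)
    (horth : ∀ X Y : selfAdjoint (Matrix (Fin N) (Fin N) ℂ),
      ((T X : Matrix (Fin N) (Fin N) ℂ) * (T Y : Matrix (Fin N) (Fin N) ℂ)).trace =
      ((X : Matrix (Fin N) (Fin N) ℂ) * (Y : Matrix (Fin N) (Fin N) ℂ)).trace)
    (A B : selfAdjoint (Matrix (Fin N) (Fin N) ℂ))
    (hTA : T A = B)
    (hBpsd : ((B : Matrix (Fin N) (Fin N) ℂ)).PosSemidef) :
    ((A : Matrix (Fin N) (Fin N) ℂ)).PosSemidef :=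
  stmt_11_general N T hpos horth A B hTA hBpsd
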